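/- Let S be a formula over ℂ. Then S is (J+ss)-injective if and only if there exist a vertex Lie algebra V over ℂ and an injective linear map φ : S → V such that the map φ̃ : ℂ[D]⊗S → V defined by φ̃(D^k⊗u) = D^k(φ(u)) satisfies φ̃(uₙv) = φ(u)ₙφ(v) for all u,v ∈ S and n ∈ ℕ. -/

import Mathlib

/-!
Forward direction: the quotient `ℂ[D]⊗S ⧸ ⟨J+ss⟩` is a vertex Lie algebra into which `S` embeds.
Its axioms reduce to the vanishing of the skew and commutator defects of arbitrary elements modulo
the ideal. Replacing an argument `a` by `D a` turns a defect into a combination of `D` applied to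
defects of `a` and defects with a shifted index, and `ℂ[D]⊗S` is spanned by the `D^k u`, so the
defects of the generators `u ∈ S` suffice. The half Jacobi identity for `k > 0` follows from the
commutator formula (`k = 0`) by the Pascal recursion `J_{k+1}(m,n) = J_k(m+1,n) - J_k(m,n+1)`.

Backward direction: `φ̃` is then a homomorphism of the products on all of `ℂ[D]⊗S`, so its kernel
is an ideal containing every defect, hence containing `⟨J+ss⟩`; as `φ̃` restricts to the injective
`φ` on `S`, we get `S ∩ ⟨J+ss⟩ = 0`.
-/

open scoped BigOperators

noncomputable section

universe u

variable {S : Type u} [AddCommGroup S] [Module ℂ S]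

/-- The operator `D` on `ℂ[D]⊗S` (realized as `ℕ →₀ S`, where `Finsupp.single k u`
stands for `D^k ⊗ u`): it sends `D^k ⊗ u` to `D^{k+1} ⊗ u`. -/
def Dop (S : Type*) [AddCommGroup S] [Module ℂ S] : (ℕ →₀ S) →ₗ[ℂ] (ℕ →₀ S) :=
  Finsupp.lmapDomain S ℂ (fun k => k + 1)

/-- A formula over `ℂ`: a vector space `S` with bilinear maps
`Fₙ : S × S → ℂ[D]⊗S` (`n : ℕ`), vanishing for `n` sufficiently large. -/
structure Formula (S : Type*) [AddCommGroup S] [Module ℂ S] where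
  F : ℕ → S →ₗ[ℂ] S →ₗ[ℂ] (ℕ →₀ S)
  trunc : ∀ u v : S, ∃ N : ℕ, ∀ n : ℕ, N ≤ n → F n u v = 0

/-- The defining properties of the extension of the products of a formula `S`
to `ℂ[D]⊗S`: it agrees with `Fₙ` on `S`, and satisfies `(DA)ₙB = −n·A_{n−1}B`,
`(DA)₀B = 0` and `D(AₙB) = (DA)ₙB + Aₙ(DB)`. -/
def ExtProp (A : Formula S)
    (M : ℕ → (ℕ →₀ S) →ₗ[ℂ] (ℕ →₀ S) →ₗ[ℂ] (ℕ →₀ S)) : Prop :=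
  (∀ (n : ℕ) (u v : S), M n (Finsupp.single 0 u) (Finsupp.single 0 v) = A.F n u v) ∧
  (∀ (n : ℕ) (x y : ℕ →₀ S), M (n + 1) (Dop S x) y = (-((n : ℂ) + 1)) • M n x y) ∧
  (∀ x y : ℕ →₀ S, M 0 (Dop S x) y = 0) ∧
  (∀ (n : ℕ) (x y : ℕ →₀ S),
    Dop S (M n x y) = M n (Dop S x) y + M n x (Dop S y))


/-- A (two-sided, `D`-invariant) ideal of `ℂ[D]⊗S` with respect to the extended
products `M`. -/
def FIsIdeal (M : ℕ → (ℕ →₀ S) →ₗ[ℂ] (ℕ →₀ S) →ₗ[ℂ] (ℕ →₀ S))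
    (I : Submodule ℂ (ℕ →₀ S)) : Prop :=
  (∀ a ∈ I, Dop S a ∈ I) ∧
  ∀ (n : ℕ) (x : ℕ →₀ S), ∀ a ∈ I, M n x a ∈ I ∧ M n a x ∈ I

/-- The commutator defects of a formula, inside `ℂ[D]⊗S`. -/
def JDefects (A : Formula S)
    (M : ℕ → (ℕ →₀ S) →ₗ[ℂ] (ℕ →₀ S) →ₗ[ℂ] (ℕ →₀ S)) : Set (ℕ →₀ S) :=
  {x : ℕ →₀ S | ∃ (u v w : S) (m n : ℕ),
    x = M m (Finsupp.single 0 u) (M n (Finsupp.single 0 v) (Finsupp.single 0 w))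
      - M n (Finsupp.single 0 v) (M m (Finsupp.single 0 u) (Finsupp.single 0 w))
      - ∑ᶠ i : ℕ, ((Nat.choose m i : ℂ)) • M (m + n - i) (A.F i u v) (Finsupp.single 0 w)}

/-- The skew defects of a formula, inside `ℂ[D]⊗S`. -/
def SSDefects (A : Formula S) : Set (ℕ →₀ S) :=
  {x : ℕ →₀ S | ∃ (u v : S) (n : ℕ),
    x = A.F n u v
      + ∑ᶠ k : ℕ, (((-1 : ℂ) ^ (n + k)) / (Nat.factorial k : ℂ)) •
          ((Dop S ^ k) (A.F (n + k) v u))}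

/-- A bundled vertex Lie algebra over `ℂ`. -/
structure VLBundle : Type (u + 1) where
  carrier : Type u
  [grp : AddCommGroup carrier]
  [mod : Module ℂ carrier]
  D : carrier →ₗ[ℂ] carrier
  mul : ℕ → carrier →ₗ[ℂ] carrier →ₗ[ℂ] carrier
  trunc : ∀ u v : carrier, ∃ N : ℕ, ∀ n : ℕ, N ≤ n → mul n u v = 0
  dLeft : ∀ (n : ℕ) (u v : carrier), mul (n + 1) (D u) v = (-((n : ℂ) + 1)) • mul n u v
  dLeftZero : ∀ u v : carrier, mul 0 (D u) v = 0
  leibniz : ∀ (n : ℕ) (u v : carrier), D (mul n u v) = mul n (D u) v + mul n u (D v)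
  skew : ∀ (n : ℕ) (u v : carrier),
    mul n u v =
      -∑ᶠ k : ℕ, (((-1 : ℂ) ^ (n + k)) / (Nat.factorial k : ℂ)) • ((D ^ k) (mul (n + k) v u))
  jacobi : ∀ (k m n : ℕ) (u v w : carrier),
    ∑ᶠ i : ℕ, ((-1 : ℂ) ^ i * (Nat.choose k i : ℂ)) •
        (mul (m + k - i) u (mul (n + i) v w)
          - ((-1 : ℂ) ^ k) • mul (n + k - i) v (mul (m + i) u w))
      = ∑ᶠ i : ℕ, ((Nat.choose m i : ℂ)) • mul (m + n - i) (mul (k + i) u v) w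

attribute [instance] VLBundle.grp VLBundle.mod

open Finset

section FiniteSums

variable {R M : Type*} [Semiring R] [AddCommGroup M] [Module R M]

lemma hasFiniteSupport_of_forall_ge {f : ℕ → M} {N : ℕ} (h : ∀ k, N ≤ k → f k = 0) :
    Function.HasFiniteSupport f :=
  (Set.finite_Iio N).subset fun k hk => by
    by_contra hN
    exact hk (h k (not_lt.1 hN))

lemma finsum_eq_sum_range_of_forall_ge {f : ℕ → M} {N : ℕ} (h : ∀ k, N ≤ k → f k = 0) :
    ∑ᶠ k, f k = ∑ k ∈ range N, f k :=
  finsum_eq_sum_of_support_subset f fun k hk => by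
    by_contra hN
    exact hk (h k (by simpa using hN))

lemma finsum_eq_add_finsum_succ {f : ℕ → M} (hf : Function.HasFiniteSupport f) :
    ∑ᶠ k, f k = f 0 + ∑ᶠ k, f (k + 1) := by
  obtain ⟨N, hN⟩ := Set.Finite.bddAbove hf
  have hvan : ∀ k, N + 1 ≤ k → f k = 0 := fun k hk => by
    by_contra h
    exact absurd (hN h) (by omega)
  rw [finsum_eq_sum_range_of_forall_ge hvan,
    finsum_eq_sum_range_of_forall_ge (N := N) fun k hk => hvan (k + 1) (by omega),
    sum_range_succ', add_comm]

lemma finsum_eq_sum_antidiagonal_of_forall_gt {f : ℕ → M} {n : ℕ} (h : ∀ k, n < k → f k = 0) :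
    ∑ᶠ k, f k = ∑ p ∈ antidiagonal n, f p.1 := by
  rw [finsum_eq_sum_range_of_forall_ge (N := n + 1) fun k hk => h k hk,
    Nat.sum_antidiagonal_eq_sum_range_succ_mk]

lemma Function.HasFiniteSupport.smul_apply_add {s : ℕ → M} (hs : Function.HasFiniteSupport s)
    (e : ℕ → R) (T : ℕ → M →ₗ[R] M) (j : ℕ) :
    Function.HasFiniteSupport fun k => e k • T k (s (k + j)) := by
  obtain ⟨N, hN⟩ := Set.Finite.bddAbove hs
  refine hasFiniteSupport_of_forall_ge (N := N + 1) fun k hk => ?_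
  rw [show s (k + j) = 0 from by_contra fun h => absurd (hN h) (by omega), map_zero, smul_zero]

lemma sum_antidiagonal_choose_succ_smul (f : ℕ → ℕ → M) (n : ℕ) :
    ∑ p ∈ antidiagonal (n + 1), ((n + 1).choose p.1 : R) • f p.1 p.2 =
      ∑ p ∈ antidiagonal n, (n.choose p.1 : R) • (f p.1 (p.2 + 1) + f (p.1 + 1) p.2) := by
  simp only [Nat.cast_smul_eq_nsmul, smul_add, sum_add_distrib]
  rw [sum_antidiagonal_choose_succ_nsmul]
  congr 1
  refine sum_congr rfl fun p hp => ?_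
  rw [Nat.choose_symm_of_eq_add (mem_antidiagonal.1 hp).symm]

lemma sum_antidiagonal_choose_smul_fst_smul (f : ℕ → ℕ → M) (m : ℕ) :
    ∑ p ∈ antidiagonal m, (m.choose p.1 : R) • (p.1 : R) • f p.1 p.2 =
      (m : R) • ∑ p ∈ antidiagonal (m - 1), ((m - 1).choose p.1 : R) • f (p.1 + 1) p.2 := by
  rcases m with _ | m
  · simp
  · rw [Nat.sum_antidiagonal_succ, smul_sum]
    simp only [Nat.cast_zero, zero_smul, smul_zero, zero_add, Nat.add_sub_cancel, smul_smul]
    refine sum_congr rfl fun p _ => ?_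
    exact_mod_cast congrArg (· • f (p.1 + 1) p.2) (Nat.add_one_mul_choose_eq m p.1).symm

lemma sum_antidiagonal_choose_smul_snd_smul (f : ℕ → ℕ → M) (m : ℕ) :
    ∑ p ∈ antidiagonal m, (m.choose p.1 : R) • (p.2 : R) • f p.1 p.2 =
      (m : R) • ∑ p ∈ antidiagonal (m - 1), ((m - 1).choose p.1 : R) • f p.1 (p.2 + 1) := by
  rcases m with _ | m
  · simp
  · rw [Nat.sum_antidiagonal_succ', smul_sum]
    simp only [Nat.cast_zero, zero_smul, smul_zero, zero_add, Nat.add_sub_cancel, smul_smul]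
    refine sum_congr rfl fun p hp => ?_
    have h := Nat.choose_mul_succ_eq m p.1
    rw [show m + 1 - p.1 = p.2 + 1 by rw [← mem_antidiagonal.1 hp]; omega, mul_comm] at h
    exact_mod_cast congrArg (· • f p.1 (p.2 + 1)) h.symm

end FiniteSums

section ConformalAlgebra

variable {V : Type*} [AddCommGroup V] [Module ℂ V]
  (D : V →ₗ[ℂ] V) (μ : ℕ → V →ₗ[ℂ] V →ₗ[ℂ] V)

/-- Axioms (ii) and (iii) of a vertex Lie algebra. Locality (i) is kept apart as `IsLocal`:
on `ℂ[D]⊗S` it follows from (ii), (iii) and the locality of the `Fₙ`. -/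
structure IsConformalAlgebra : Prop where
  dLeft : ∀ (n : ℕ) (a b : V), μ (n + 1) (D a) b = (-((n : ℂ) + 1)) • μ n a b
  dLeftZero : ∀ a b : V, μ 0 (D a) b = 0
  leibniz : ∀ (n : ℕ) (a b : V), D (μ n a b) = μ n (D a) b + μ n a (D b)

def IsLocal : Prop := ∀ a b : V, ∃ N : ℕ, ∀ n : ℕ, N ≤ n → μ n a b = 0

def skewDefect (n : ℕ) (a b : V) : V :=
  μ n a b + ∑ᶠ k : ℕ, (((-1 : ℂ) ^ (n + k)) / (Nat.factorial k : ℂ)) • ((D ^ k) (μ (n + k) b a))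

/-- The defect of the half Jacobi identity (v), with the sums indexed by antidiagonals
(`i + j = k`, resp. `i + j = m`) to avoid truncated subtraction. For `k = 0` it is the defect of the
commutator formula. -/
def jacobiDefect (k m n : ℕ) (a b c : V) : V :=
  ∑ p ∈ antidiagonal k, (k.choose p.1 : ℂ) •
      ((-1 : ℂ) ^ p.1 • μ (m + p.2) a (μ (n + p.1) b c)
        - (-1 : ℂ) ^ p.2 • μ (n + p.2) b (μ (m + p.1) a c))
    - ∑ p ∈ antidiagonal m, (m.choose p.1 : ℂ) • μ (n + p.2) (μ (k + p.1) a b) c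

variable {D μ}

lemma IsConformalAlgebra.mul_D_left (hμ : IsConformalAlgebra D μ) (n : ℕ) (a b : V) :
    μ n (D a) b = (-(n : ℂ)) • μ (n - 1) a b := by
  cases n with
  | zero => simp [hμ.dLeftZero]
  | succ n => simp [hμ.dLeft, add_comm]

lemma IsConformalAlgebra.mul_D_right (hμ : IsConformalAlgebra D μ) (n : ℕ) (a b : V) :
    μ n a (D b) = D (μ n a b) + (n : ℂ) • μ (n - 1) a b := by
  rw [hμ.leibniz, hμ.mul_D_left, neg_smul]
  abel

lemma neg_one_pow_div_factorial_add_succ (n k : ℕ) :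
    (-1 : ℂ) ^ (n + k) / (Nat.factorial k : ℂ)
      + (-1 : ℂ) ^ (n + (k + 1)) / (Nat.factorial (k + 1) : ℂ) * ((k : ℂ) + 1) = 0 := by
  rw [Nat.factorial_succ, Nat.cast_mul, ← add_assoc, pow_succ]
  field_simp
  push_cast
  ring

lemma finsum_neg_one_pow_div_factorial_shift (D : V →ₗ[ℂ] V) (n : ℕ) {s : ℕ → V}
    (hs : Function.HasFiniteSupport s) :
    ∑ᶠ k, ((-1 : ℂ) ^ (n + k) / (Nat.factorial k : ℂ)) • (D ^ (k + 1)) (s (k + 1))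
      + ∑ᶠ k, ((-1 : ℂ) ^ (n + k) / (Nat.factorial k : ℂ) * k) • (D ^ k) (s k) = 0 := by
  rw [finsum_eq_add_finsum_succ (f := fun k => ((-1 : ℂ) ^ (n + k) / (Nat.factorial k : ℂ) * k) •
    (D ^ k) (s k)) (hs.smul_apply_add _ (fun k => D ^ k) 0)]
  simp only [Nat.cast_zero, mul_zero, zero_smul, zero_add]
  rw [← finsum_add_distrib (hs.smul_apply_add _ (fun k => D ^ (k + 1)) 1)
    (hs.smul_apply_add _ (fun k => D ^ (k + 1)) 1)]
  refine finsum_eq_zero_of_forall_eq_zero fun k => ?_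
  rw [← add_smul, Nat.cast_add_one, neg_one_pow_div_factorial_add_succ, zero_smul]

lemma IsLocal.hasFiniteSupport_skew (hloc : IsLocal μ) (n : ℕ) (a b : V) :
    Function.HasFiniteSupport fun k : ℕ =>
      (((-1 : ℂ) ^ (n + k)) / (Nat.factorial k : ℂ)) • ((D ^ k) (μ (n + k) b a)) := by
  obtain ⟨N, hN⟩ := hloc b a
  exact hasFiniteSupport_of_forall_ge (N := N) fun k hk => by rw [hN _ (by omega)]; simp

lemma IsConformalAlgebra.skewDefect_D_left (hμ : IsConformalAlgebra D μ) (hloc : IsLocal μ)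
    (n : ℕ) (a b : V) :
    skewDefect D μ n (D a) b = (-(n : ℂ)) • skewDefect D μ (n - 1) a b := by
  set c : ℕ → ℂ := fun k => (-1 : ℂ) ^ (n + k) / (Nat.factorial k : ℂ) with hc
  set s : ℕ → V := fun k => μ (n + k - 1) b a with hs
  have hfin : Function.HasFiniteSupport s := by
    obtain ⟨N, hN⟩ := hloc b a
    exact hasFiniteSupport_of_forall_ge (N := N + 1) fun k hk => hN _ (by omega)
  have hsplit : ∀ k, c k • (D ^ k) (μ (n + k) b (D a)) =
      (c k • (D ^ (k + 1)) (s (k + 1)) + (c k * k) • (D ^ k) (s k))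
        + (c k * n) • (D ^ k) (s k) := by
    intro k
    rw [hμ.mul_D_right, map_add, map_smul, pow_succ, Module.End.mul_apply, hs]
    dsimp only
    rw [show n + (k + 1) - 1 = n + k by omega]
    push_cast
    module
  have hshift : ∀ k, (c k * n) • (D ^ k) (s k) = (-(n : ℂ)) •
      (((-1 : ℂ) ^ (n - 1 + k) / (Nat.factorial k : ℂ)) • (D ^ k) (μ (n - 1 + k) b a)) := by
    intro k
    rcases n with _ | n
    · simp
    · rw [smul_smul, hs, hc]
      beta_reduce
      rw [show n + 1 + k - 1 = n + 1 - 1 + k by omega]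
      congr 1
      simp only [Nat.add_sub_cancel, pow_succ, add_right_comm n 1 k]
      push_cast
      ring
  have hfin₁ : Function.HasFiniteSupport fun k => c k • (D ^ (k + 1)) (s (k + 1)) :=
    hfin.smul_apply_add c (fun k => D ^ (k + 1)) 1
  have hfin₂ : Function.HasFiniteSupport fun k => (c k * k) • (D ^ k) (s k) :=
    hfin.smul_apply_add _ (fun k => D ^ k) 0
  have hfin₃ : Function.HasFiniteSupport fun k => (c k * n) • (D ^ k) (s k) :=
    hfin.smul_apply_add _ (fun k => D ^ k) 0
  rw [skewDefect, skewDefect, hμ.mul_D_left, finsum_congr hsplit,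
    finsum_add_distrib (hfin₁.fun_add hfin₂) hfin₃,
    finsum_add_distrib hfin₁ hfin₂, finsum_neg_one_pow_div_factorial_shift D n hfin, zero_add,
    finsum_congr hshift, ← smul_finsum, smul_add]

lemma IsConformalAlgebra.D_skewDefect (hμ : IsConformalAlgebra D μ) (hloc : IsLocal μ)
    (n : ℕ) (a b : V) :
    D (skewDefect D μ n a b) = skewDefect D μ n (D a) b + skewDefect D μ n a (D b) := by
  have hD : ∀ k, D ((((-1 : ℂ) ^ (n + k)) / (Nat.factorial k : ℂ)) • (D ^ k) (μ (n + k) b a)) =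
      (((-1 : ℂ) ^ (n + k)) / (Nat.factorial k : ℂ)) • (D ^ k) (μ (n + k) b (D a))
        + (((-1 : ℂ) ^ (n + k)) / (Nat.factorial k : ℂ)) • (D ^ k) (μ (n + k) (D b) a) := by
    intro k
    rw [map_smul, ← Module.End.mul_apply, ← pow_succ', pow_succ, Module.End.mul_apply,
      hμ.leibniz, map_add, smul_add, add_comm]
  rw [skewDefect, skewDefect, skewDefect, map_add, hμ.leibniz,
    map_finsum D (hloc.hasFiniteSupport_skew n a b), finsum_congr hD,
    finsum_add_distrib (hloc.hasFiniteSupport_skew n (D a) b)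
      (hloc.hasFiniteSupport_skew n a (D b))]
  abel

lemma IsConformalAlgebra.skewDefect_D_right (hμ : IsConformalAlgebra D μ) (hloc : IsLocal μ)
    (n : ℕ) (a b : V) :
    skewDefect D μ n a (D b) = D (skewDefect D μ n a b) + (n : ℂ) • skewDefect D μ (n - 1) a b := by
  rw [hμ.D_skewDefect hloc, hμ.skewDefect_D_left hloc, neg_smul]
  abel

lemma IsLocal.skewDefect_add_left (hloc : IsLocal μ) (n : ℕ) (a a' b : V) :
    skewDefect D μ n (a + a') b = skewDefect D μ n a b + skewDefect D μ n a' b := by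
  simp only [skewDefect, map_add, LinearMap.add_apply, smul_add]
  rw [finsum_add_distrib (hloc.hasFiniteSupport_skew n a b) (hloc.hasFiniteSupport_skew n a' b)]
  abel

lemma IsLocal.skewDefect_add_right (hloc : IsLocal μ) (n : ℕ) (a b b' : V) :
    skewDefect D μ n a (b + b') = skewDefect D μ n a b + skewDefect D μ n a b' := by
  simp only [skewDefect, map_add, LinearMap.add_apply, smul_add]
  rw [finsum_add_distrib (hloc.hasFiniteSupport_skew n a b) (hloc.hasFiniteSupport_skew n a b')]
  abel

lemma jacobiDefect_zero (m n : ℕ) (a b c : V) :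
    jacobiDefect μ 0 m n a b c = μ m a (μ n b c) - μ n b (μ m a c)
      - ∑ p ∈ antidiagonal m, (m.choose p.1 : ℂ) • μ (n + p.2) (μ p.1 a b) c := by
  simp [jacobiDefect]

lemma jacobiDefect_succ (k m n : ℕ) (a b c : V) :
    jacobiDefect μ (k + 1) m n a b c =
      jacobiDefect μ k (m + 1) n a b c - jacobiDefect μ k m (n + 1) a b c := by
  have hL := sum_antidiagonal_choose_succ_smul (R := ℂ) (fun i j =>
    (-1 : ℂ) ^ i • μ (m + j) a (μ (n + i) b c) - (-1 : ℂ) ^ j • μ (n + j) b (μ (m + i) a c)) k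
  have hR := sum_antidiagonal_choose_succ_smul (R := ℂ)
    (fun i j => μ (n + j) (μ (k + i) a b) c) m
  beta_reduce at hL hR
  rw [jacobiDefect, jacobiDefect, jacobiDefect, hL, hR]
  simp only [add_right_comm _ 1, ← add_assoc, pow_succ, mul_neg_one, neg_smul, smul_add,
    smul_sub, smul_neg, sum_add_distrib, sum_sub_distrib, sum_neg_distrib]
  abel

lemma jacobiDefect_mem_of_forall_zero_mem {G : AddSubgroup V} {a b c : V}
    (h : ∀ m n, jacobiDefect μ 0 m n a b c ∈ G) (k m n : ℕ) :
    jacobiDefect μ k m n a b c ∈ G := by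
  induction k generalizing m n with
  | zero => exact h m n
  | succ k ih => rw [jacobiDefect_succ]; exact G.sub_mem (ih _ _) (ih _ _)

lemma IsConformalAlgebra.jacobiDefect_zero_D_left (hμ : IsConformalAlgebra D μ)
    (m n : ℕ) (a b c : V) :
    jacobiDefect μ 0 m n (D a) b c = (-(m : ℂ)) • jacobiDefect μ 0 (m - 1) n a b c := by
  have hsum := sum_antidiagonal_choose_smul_fst_smul (R := ℂ)
    (fun i j => μ (n + j) (μ (i - 1) a b) c) m
  simp only [Nat.add_sub_cancel] at hsum
  have hterm : ∀ p : ℕ × ℕ, (m.choose p.1 : ℂ) • μ (n + p.2) (μ p.1 (D a) b) c =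
      -((m.choose p.1 : ℂ) • (p.1 : ℂ) • μ (n + p.2) (μ (p.1 - 1) a b) c) := by
    intro p
    rw [hμ.mul_D_left, map_smul, LinearMap.smul_apply, neg_smul, smul_neg]
  rw [jacobiDefect_zero, jacobiDefect_zero, sum_congr rfl fun p _ => hterm p, sum_neg_distrib,
    hsum, hμ.mul_D_left, hμ.mul_D_left, map_smul]
  module

lemma IsConformalAlgebra.jacobiDefect_zero_D_right (hμ : IsConformalAlgebra D μ)
    (m n : ℕ) (a b c : V) :
    jacobiDefect μ 0 m n a b (D c) = D (jacobiDefect μ 0 m n a b c)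
      + (m : ℂ) • jacobiDefect μ 0 (m - 1) n a b c
      + (n : ℂ) • jacobiDefect μ 0 m (n - 1) a b c := by
  have hsum := sum_antidiagonal_choose_smul_snd_smul (R := ℂ)
    (fun i j => μ (n + j - 1) (μ i a b) c) m
  have hnsum : ∑ p ∈ antidiagonal m, (m.choose p.1 : ℂ) • (n : ℂ) • μ (n + p.2 - 1) (μ p.1 a b) c
      = (n : ℂ) • ∑ p ∈ antidiagonal m, (m.choose p.1 : ℂ) • μ (n - 1 + p.2) (μ p.1 a b) c := by
    rw [smul_sum]
    refine sum_congr rfl fun p _ => ?_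
    rw [smul_comm]
    rcases n with _ | n
    · simp
    · rw [show n + 1 + p.2 - 1 = n + 1 - 1 + p.2 by omega]
  simp only [show ∀ j, n + (j + 1) - 1 = n + j from fun j => by omega] at hsum
  simp only [jacobiDefect_zero, hμ.mul_D_right, map_add, map_sub, map_sum, map_smul, smul_add,
    sum_add_distrib, Nat.cast_add, add_smul, hsum, hnsum]
  module

lemma IsConformalAlgebra.D_jacobiDefect (hμ : IsConformalAlgebra D μ) (k m n : ℕ) (a b c : V) :
    D (jacobiDefect μ k m n a b c) = jacobiDefect μ k m n (D a) b c
      + jacobiDefect μ k m n a (D b) c + jacobiDefect μ k m n a b (D c) := by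
  simp only [jacobiDefect, map_sub, map_sum, map_smul, hμ.leibniz, map_add, LinearMap.add_apply,
    smul_add, smul_sub, sum_add_distrib, sum_sub_distrib]
  abel

lemma IsConformalAlgebra.jacobiDefect_zero_D_middle (hμ : IsConformalAlgebra D μ)
    (m n : ℕ) (a b c : V) :
    jacobiDefect μ 0 m n a (D b) c = (-(n : ℂ)) • jacobiDefect μ 0 m (n - 1) a b c := by
  have h := hμ.D_jacobiDefect 0 m n a b c
  rw [hμ.jacobiDefect_zero_D_left, hμ.jacobiDefect_zero_D_right] at h
  linear_combination (norm := module) -h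

lemma jacobiDefect_add_left (k m n : ℕ) (a a' b c : V) :
    jacobiDefect μ k m n (a + a') b c =
      jacobiDefect μ k m n a b c + jacobiDefect μ k m n a' b c := by
  simp only [jacobiDefect, map_add, LinearMap.add_apply, smul_add, smul_sub, sum_add_distrib,
    sum_sub_distrib]
  abel

lemma jacobiDefect_add_middle (k m n : ℕ) (a b b' c : V) :
    jacobiDefect μ k m n a (b + b') c =
      jacobiDefect μ k m n a b c + jacobiDefect μ k m n a b' c := by
  simp only [jacobiDefect, map_add, LinearMap.add_apply, smul_add, smul_sub, sum_add_distrib,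
    sum_sub_distrib]
  abel

lemma jacobiDefect_add_right (k m n : ℕ) (a b c c' : V) :
    jacobiDefect μ k m n a b (c + c') =
      jacobiDefect μ k m n a b c + jacobiDefect μ k m n a b c' := by
  simp only [jacobiDefect, map_add, smul_add, smul_sub, sum_add_distrib, sum_sub_distrib]
  abel

lemma jacobiDefect_eq_finsum (k m n : ℕ) (a b c : V) :
    jacobiDefect μ k m n a b c =
      ∑ᶠ i : ℕ, ((-1 : ℂ) ^ i * (Nat.choose k i : ℂ)) •
          (μ (m + k - i) a (μ (n + i) b c) - ((-1 : ℂ) ^ k) • μ (n + k - i) b (μ (m + i) a c))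
        - ∑ᶠ i : ℕ, ((Nat.choose m i : ℂ)) • μ (m + n - i) (μ (k + i) a b) c := by
  rw [finsum_eq_sum_antidiagonal_of_forall_gt (n := k) fun i hi => by
      rw [Nat.choose_eq_zero_of_lt hi, Nat.cast_zero, mul_zero, zero_smul],
    finsum_eq_sum_antidiagonal_of_forall_gt (n := m) fun i hi => by
      rw [Nat.choose_eq_zero_of_lt hi, Nat.cast_zero, zero_smul], jacobiDefect]
  congr 1 <;> refine sum_congr rfl fun p hp => ?_ <;> obtain ⟨i, j⟩ := p <;>
    obtain rfl := mem_antidiagonal.1 hp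
  · have hsign : (-1 : ℂ) ^ i * (-1 : ℂ) ^ (i + j) = (-1 : ℂ) ^ j := by
      rw [← pow_add, show i + (i + j) = j + 2 * i by ring, pow_add, pow_mul]; norm_num
    simp only [show m + (i + j) - i = m + j by omega, show n + (i + j) - i = n + j by omega,
      smul_sub, smul_smul, ← hsign]
    congr 1 <;> ring_nf
  · simp only [show i + j + n - i = n + j by omega]

section Hom

variable {W : Type*} [AddCommGroup W] [Module ℂ W]
  {D' : W →ₗ[ℂ] W} {μ' : ℕ → W →ₗ[ℂ] W →ₗ[ℂ] W} {f : V →ₗ[ℂ] W}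

lemma map_skewDefect (hloc : IsLocal μ) (hfD : Function.Semiconj f D D')
    (hfμ : ∀ n a b, f (μ n a b) = μ' n (f a) (f b)) (n : ℕ) (a b : V) :
    f (skewDefect D μ n a b) = skewDefect D' μ' n (f a) (f b) := by
  rw [skewDefect, skewDefect, map_add, map_finsum f (hloc.hasFiniteSupport_skew n a b), hfμ]
  congr 1
  refine finsum_congr fun k => ?_
  rw [map_smul, Module.End.pow_apply, Module.End.pow_apply, (hfD.iterate_right k).eq, hfμ]

lemma map_jacobiDefect (hfμ : ∀ n a b, f (μ n a b) = μ' n (f a) (f b)) (k m n : ℕ) (a b c : V) :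
    f (jacobiDefect μ k m n a b c) = jacobiDefect μ' k m n (f a) (f b) (f c) := by
  simp only [jacobiDefect, map_sub, map_sum, map_smul, hfμ]

lemma IsConformalAlgebra.of_surjective (hμ : IsConformalAlgebra D μ)
    (hf : Function.Surjective f) (hfD : Function.Semiconj f D D')
    (hfμ : ∀ n a b, f (μ n a b) = μ' n (f a) (f b)) : IsConformalAlgebra D' μ' := by
  refine ⟨fun n a b => ?_, fun a b => ?_, fun n a b => ?_⟩ <;>
    obtain ⟨x, rfl⟩ := hf a <;> obtain ⟨y, rfl⟩ := hf b
  · rw [← hfD.eq, ← hfμ, ← hfμ, hμ.dLeft, map_smul]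
  · rw [← hfD.eq, ← hfμ, hμ.dLeftZero, map_zero]
  · rw [← hfD.eq, ← hfD.eq, ← hfμ, ← hfμ, ← hfμ, ← hfD.eq, hμ.leibniz, map_add]

lemma IsLocal.of_surjective (hloc : IsLocal μ) (hf : Function.Surjective f)
    (hfμ : ∀ n a b, f (μ n a b) = μ' n (f a) (f b)) : IsLocal μ' := by
  intro a b
  obtain ⟨x, rfl⟩ := hf a
  obtain ⟨y, rfl⟩ := hf b
  obtain ⟨N, hN⟩ := hloc x y
  exact ⟨N, fun n hn => by rw [← hfμ, hN n hn, map_zero]⟩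

end Hom

end ConformalAlgebra

lemma VLBundle.isConformalAlgebra (V : VLBundle.{u}) : IsConformalAlgebra V.D V.mul :=
  ⟨V.dLeft, V.dLeftZero, V.leibniz⟩

lemma VLBundle.skewDefect_eq_zero (V : VLBundle.{u}) (n : ℕ) (a b : V.carrier) :
    skewDefect V.D V.mul n a b = 0 := by
  rw [skewDefect, V.skew, neg_add_cancel]

lemma VLBundle.jacobiDefect_eq_zero (V : VLBundle.{u}) (k m n : ℕ) (a b c : V.carrier) :
    jacobiDefect V.mul k m n a b c = 0 := by
  rw [jacobiDefect_eq_finsum, V.jacobi, sub_self]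

def VLBundle.ofIsConformalAlgebra {V : Type u} [AddCommGroup V] [Module ℂ V]
    (D : V →ₗ[ℂ] V) (μ : ℕ → V →ₗ[ℂ] V →ₗ[ℂ] V) (hμ : IsConformalAlgebra D μ) (hloc : IsLocal μ)
    (hskew : ∀ n a b, skewDefect D μ n a b = 0)
    (hjac : ∀ k m n a b c, jacobiDefect μ k m n a b c = 0) : VLBundle.{u} where
  carrier := V
  D := D
  mul := μ
  trunc := hloc
  dLeft := hμ.dLeft
  dLeftZero := hμ.dLeftZero
  leibniz := hμ.leibniz
  skew n a b := eq_neg_of_add_eq_zero_left (hskew n a b)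
  jacobi k m n a b c := by rw [← sub_eq_zero, ← jacobiDefect_eq_finsum, hjac]

section Extension

variable {A : Formula S} {M : ℕ → (ℕ →₀ S) →ₗ[ℂ] (ℕ →₀ S) →ₗ[ℂ] (ℕ →₀ S)}

lemma Dop_single (k : ℕ) (u : S) : Dop S (Finsupp.single k u) = Finsupp.single (k + 1) u := by
  simp [Dop]

lemma Dop_pow_single (k : ℕ) (u : S) : (Dop S ^ k) (Finsupp.single 0 u) = Finsupp.single k u := by
  induction k with
  | zero => simp
  | succ k ih => rw [pow_succ', Module.End.mul_apply, ih, Dop_single]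

theorem Dop_induction {P : (ℕ →₀ S) → Prop} (zero : P 0) (add : ∀ x y, P x → P y → P (x + y))
    (single : ∀ u, P (Finsupp.single 0 u)) (dop : ∀ x, P x → P (Dop S x)) (x : ℕ →₀ S) : P x := by
  induction x using Finsupp.induction_linear with
  | zero => exact zero
  | add x y hx hy => exact add x y hx hy
  | single k u =>
    rw [← Dop_pow_single]
    induction k with
    | zero => exact single u
    | succ k ih => rw [pow_succ', Module.End.mul_apply]; exact dop _ ih

theorem Dop_induction₂ {P : (ℕ →₀ S) → (ℕ →₀ S) → Prop} (zero_left : ∀ y, P 0 y)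
    (zero_right : ∀ x, P x 0) (add_left : ∀ x x' y, P x y → P x' y → P (x + x') y)
    (add_right : ∀ x y y', P x y → P x y' → P x (y + y'))
    (single : ∀ u v, P (Finsupp.single 0 u) (Finsupp.single 0 v))
    (dop_left : ∀ x y, P x y → P (Dop S x) y) (dop_right : ∀ x y, P x y → P x (Dop S y))
    (x y : ℕ →₀ S) : P x y :=
  Dop_induction (P := fun x => ∀ y, P x y) zero_left
    (fun x x' hx hx' y => add_left x x' y (hx y) (hx' y))
    (fun u => Dop_induction (zero_right _) (add_right _) (single u) (dop_right _))
    (fun x hx y => dop_left x y (hx y)) x y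

lemma ExtProp.isConformalAlgebra (hM : ExtProp A M) : IsConformalAlgebra (Dop S) M :=
  ⟨hM.2.1, hM.2.2.1, hM.2.2.2⟩

lemma ExtProp.isLocal (hM : ExtProp A M) : IsLocal M := by
  have hμ := hM.isConformalAlgebra
  refine Dop_induction₂ (P := fun x y => ∃ N, ∀ n, N ≤ n → M n x y = 0)
    (fun y => ⟨0, fun n _ => by simp⟩) (fun x => ⟨0, fun n _ => by simp⟩) ?_ ?_ ?_ ?_ ?_
  · rintro x x' y ⟨N, hN⟩ ⟨N', hN'⟩
    exact ⟨N + N', fun n hn => by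
      rw [map_add, LinearMap.add_apply, hN n (by omega), hN' n (by omega), add_zero]⟩
  · rintro x y y' ⟨N, hN⟩ ⟨N', hN'⟩
    exact ⟨N + N', fun n hn => by rw [map_add, hN n (by omega), hN' n (by omega), add_zero]⟩
  · intro u v
    obtain ⟨N, hN⟩ := A.trunc u v
    exact ⟨N, fun n hn => by rw [hM.1, hN n hn]⟩
  · rintro x y ⟨N, hN⟩
    exact ⟨N + 1, fun n hn => by rw [hμ.mul_D_left, hN (n - 1) (by omega), smul_zero]⟩
  · rintro x y ⟨N, hN⟩
    exact ⟨N + 1, fun n hn => by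
      rw [hμ.mul_D_right, hN n (by omega), hN (n - 1) (by omega), map_zero, smul_zero, add_zero]⟩

lemma ExtProp.skewDefect_single (hM : ExtProp A M) (n : ℕ) (u v : S) :
    skewDefect (Dop S) M n (Finsupp.single 0 u) (Finsupp.single 0 v) = A.F n u v
      + ∑ᶠ k : ℕ, (((-1 : ℂ) ^ (n + k)) / (Nat.factorial k : ℂ)) •
          ((Dop S ^ k) (A.F (n + k) v u)) := by
  simp only [skewDefect, hM.1]

lemma ExtProp.jacobiDefect_single (hM : ExtProp A M) (m n : ℕ) (u v w : S) :
    jacobiDefect M 0 m n (Finsupp.single 0 u) (Finsupp.single 0 v) (Finsupp.single 0 w) =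
      M m (Finsupp.single 0 u) (M n (Finsupp.single 0 v) (Finsupp.single 0 w))
      - M n (Finsupp.single 0 v) (M m (Finsupp.single 0 u) (Finsupp.single 0 w))
      - ∑ᶠ i : ℕ, ((Nat.choose m i : ℂ)) • M (m + n - i) (A.F i u v) (Finsupp.single 0 w) := by
  rw [jacobiDefect_zero, finsum_eq_sum_antidiagonal_of_forall_gt (n := m) fun i hi => by
    rw [Nat.choose_eq_zero_of_lt hi, Nat.cast_zero, zero_smul]]
  refine congrArg _ (sum_congr rfl fun p hp => ?_)
  rw [hM.1, ← mem_antidiagonal.1 hp, show p.1 + p.2 + n - p.1 = n + p.2 by omega]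

lemma ExtProp.skewDefect_mem (hM : ExtProp A M) {I : Submodule ℂ (ℕ →₀ S)} (hI : FIsIdeal M I)
    (hss : SSDefects A ⊆ I) (x y : ℕ →₀ S) (n : ℕ) : skewDefect (Dop S) M n x y ∈ I := by
  have hμ := hM.isConformalAlgebra
  have hloc := hM.isLocal
  refine Dop_induction₂ (P := fun x y => ∀ n, skewDefect (Dop S) M n x y ∈ I)
    (fun y n => by simp [skewDefect]) (fun x n => by simp [skewDefect])
    (fun x x' y hx hx' n => by rw [hloc.skewDefect_add_left]; exact add_mem (hx n) (hx' n))
    (fun x y y' hy hy' n => by rw [hloc.skewDefect_add_right]; exact add_mem (hy n) (hy' n))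
    (fun u v n => hss ⟨u, v, n, hM.skewDefect_single n u v⟩)
    (fun x y h n => by rw [hμ.skewDefect_D_left hloc]; exact I.smul_mem _ (h _))
    (fun x y h n => by
      rw [hμ.skewDefect_D_right hloc]; exact add_mem (hI.1 _ (h n)) (I.smul_mem _ (h _))) x y n

lemma ExtProp.jacobiDefect_mem (hM : ExtProp A M) {I : Submodule ℂ (ℕ →₀ S)} (hI : FIsIdeal M I)
    (hj : JDefects A M ⊆ I) (k m n : ℕ) (x y z : ℕ →₀ S) : jacobiDefect M k m n x y z ∈ I := by
  have hμ := hM.isConformalAlgebra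
  refine jacobiDefect_mem_of_forall_zero_mem (G := I.toAddSubgroup) (fun m n => ?_) k m n
  refine Dop_induction₂ (P := fun x y => ∀ z m n, jacobiDefect M 0 m n x y z ∈ I)
    (fun y z m n => by simp [jacobiDefect]) (fun x z m n => by simp [jacobiDefect])
    (fun x x' y hx hx' z m n => by
      rw [jacobiDefect_add_left]; exact add_mem (hx z m n) (hx' z m n))
    (fun x y y' hy hy' z m n => by
      rw [jacobiDefect_add_middle]; exact add_mem (hy z m n) (hy' z m n))
    (fun u v => Dop_induction (fun m n => by simp [jacobiDefect])
      (fun z z' hz hz' m n => by rw [jacobiDefect_add_right]; exact add_mem (hz m n) (hz' m n))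
      (fun w m n => hj ⟨u, v, w, m, n, hM.jacobiDefect_single m n u v w⟩)
      (fun z h m n => by
        rw [hμ.jacobiDefect_zero_D_right]
        exact add_mem (add_mem (hI.1 _ (h m n)) (I.smul_mem _ (h _ _))) (I.smul_mem _ (h _ _))))
    (fun x y h z m n => by rw [hμ.jacobiDefect_zero_D_left]; exact I.smul_mem _ (h _ _ _))
    (fun x y h z m n => by rw [hμ.jacobiDefect_zero_D_middle]; exact I.smul_mem _ (h _ _ _))
    x y z m n

end Extension

section Lift

variable {V : Type*} [AddCommGroup V] [Module ℂ V] (D : Module.End ℂ V) (φ : S →ₗ[ℂ] V)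

def liftD : (ℕ →₀ S) →ₗ[ℂ] V := Finsupp.lsum ℂ fun k => (D ^ k) ∘ₗ φ

lemma liftD_single (k : ℕ) (u : S) : liftD D φ (Finsupp.single k u) = (D ^ k) (φ u) := by
  simp [liftD]

lemma liftD_apply (z : ℕ →₀ S) : liftD D φ z = ∑ᶠ k, (D ^ k) (φ (z k)) := by
  rw [finsum_eq_sum_of_support_subset (s := z.support) _ fun k hk => by
    by_contra h
    exact hk (by simp only [Finsupp.notMem_support_iff.1 h, map_zero])]
  rfl

lemma semiconj_liftD : Function.Semiconj (liftD D φ) (Dop S) D := by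
  refine LinearMap.congr_fun
    (f := liftD D φ ∘ₗ Dop S) (g := D ∘ₗ liftD D φ) (Finsupp.lhom_ext fun k u => ?_)
  simp only [LinearMap.comp_apply, Dop_single, liftD_single, pow_succ', Module.End.mul_apply]

variable {D}

lemma eq_liftD {f : (ℕ →₀ S) →ₗ[ℂ] V} (hf : Function.Semiconj f (Dop S) D) :
    f = liftD D (f ∘ₗ Finsupp.lsingle 0) := by
  refine Finsupp.lhom_ext fun k u => ?_
  rw [liftD_single, ← Dop_pow_single, LinearMap.comp_apply, Finsupp.lsingle_apply,
    Module.End.pow_apply, Module.End.pow_apply, (hf.iterate_right k).eq]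

variable {A : Formula S} {M : ℕ → (ℕ →₀ S) →ₗ[ℂ] (ℕ →₀ S) →ₗ[ℂ] (ℕ →₀ S)}
  {μ : ℕ → V →ₗ[ℂ] V →ₗ[ℂ] V} {f : (ℕ →₀ S) →ₗ[ℂ] V}

lemma ExtProp.map_mul_of_single (hM : ExtProp A M) (hμ : IsConformalAlgebra D μ)
    (hfD : Function.Semiconj f (Dop S) D)
    (h : ∀ n u v, f (M n (Finsupp.single 0 u) (Finsupp.single 0 v)) =
      μ n (f (Finsupp.single 0 u)) (f (Finsupp.single 0 v)))
    (n : ℕ) (x y : ℕ →₀ S) : f (M n x y) = μ n (f x) (f y) := by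
  have hMc := hM.isConformalAlgebra
  refine Dop_induction₂ (P := fun x y => ∀ n, f (M n x y) = μ n (f x) (f y))
    (fun y n => by simp) (fun x n => by simp)
    (fun x x' y hx hx' n => by simp only [map_add, LinearMap.add_apply, hx n, hx' n])
    (fun x y y' hy hy' n => by simp only [map_add, hy n, hy' n]) (fun u v n => h n u v)
    (fun x y hxy n => by rw [hMc.mul_D_left, map_smul, hxy, hfD.eq, hμ.mul_D_left])
    (fun x y hxy n => by
      rw [hMc.mul_D_right, map_add, map_smul, hfD.eq, hxy, hxy, hfD.eq, hμ.mul_D_right]) x y n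

lemma fIsIdeal_ker (hfD : Function.Semiconj f (Dop S) D)
    (hfμ : ∀ n x y, f (M n x y) = μ n (f x) (f y)) : FIsIdeal M (LinearMap.ker f) := by
  refine ⟨fun a ha => ?_, fun n x a ha => ⟨?_, ?_⟩⟩ <;> rw [LinearMap.mem_ker] at ha ⊢
  · rw [hfD.eq, ha, map_zero]
  · rw [hfμ, ha, map_zero]
  · rw [hfμ, ha, map_zero, LinearMap.zero_apply]

end Lift

section Quotient

variable {A : Formula S} {M : ℕ → (ℕ →₀ S) →ₗ[ℂ] (ℕ →₀ S) →ₗ[ℂ] (ℕ →₀ S)}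
  {I : Submodule ℂ (ℕ →₀ S)}

def FIsIdeal.quotientD (hI : FIsIdeal M I) : Module.End ℂ ((ℕ →₀ S) ⧸ I) :=
  I.mapQ I (Dop S) fun a ha => hI.1 a ha

def FIsIdeal.quotientMul (hI : FIsIdeal M I) (n : ℕ) :
    (ℕ →₀ S) ⧸ I →ₗ[ℂ] (ℕ →₀ S) ⧸ I →ₗ[ℂ] (ℕ →₀ S) ⧸ I :=
  LinearMap.liftQ₂ I I ((M n).compr₂ I.mkQ)
    (fun a ha => LinearMap.ext fun y => (Submodule.Quotient.mk_eq_zero I).2 (hI.2 n y a ha).2)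
    (fun b hb => LinearMap.ext fun x => (Submodule.Quotient.mk_eq_zero I).2 (hI.2 n x b hb).1)

def FIsIdeal.quotientVL (hI : FIsIdeal M I) (hM : ExtProp A M)
    (hdef : JDefects A M ∪ SSDefects A ⊆ I) : VLBundle.{u} :=
  have hD : Function.Semiconj I.mkQ (Dop S) hI.quotientD := fun _ => rfl
  have hmul : ∀ n x y, I.mkQ (M n x y) = hI.quotientMul n (I.mkQ x) (I.mkQ y) :=
    fun _ _ _ => rfl
  VLBundle.ofIsConformalAlgebra hI.quotientD hI.quotientMul
    (hM.isConformalAlgebra.of_surjective I.mkQ_surjective hD hmul)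
    (hM.isLocal.of_surjective I.mkQ_surjective hmul)
    (fun n a b => by
      obtain ⟨x, rfl⟩ := I.mkQ_surjective a
      obtain ⟨y, rfl⟩ := I.mkQ_surjective b
      rw [← map_skewDefect hM.isLocal hD hmul, Submodule.mkQ_apply,
        Submodule.Quotient.mk_eq_zero]
      exact hM.skewDefect_mem hI (Set.subset_union_right.trans hdef) x y n)
    (fun k m n a b c => by
      obtain ⟨x, rfl⟩ := I.mkQ_surjective a
      obtain ⟨y, rfl⟩ := I.mkQ_surjective b
      obtain ⟨z, rfl⟩ := I.mkQ_surjective c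
      rw [← map_jacobiDefect hmul, Submodule.mkQ_apply, Submodule.Quotient.mk_eq_zero]
      exact hM.jacobiDefect_mem hI (Set.subset_union_left.trans hdef) k m n x y z)

end Quotient

section Main

variable {A : Formula S} {M : ℕ → (ℕ →₀ S) →ₗ[ℂ] (ℕ →₀ S) →ₗ[ℂ] (ℕ →₀ S)}
  {I : Submodule ℂ (ℕ →₀ S)}

theorem exists_vertexLie_of_injective (hM : ExtProp A M) (hI : FIsIdeal M I)
    (hdef : JDefects A M ∪ SSDefects A ⊆ I) (hinj : ∀ u : S, Finsupp.single 0 u ∈ I → u = 0) :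
    ∃ (V : VLBundle.{u}) (φ : S →ₗ[ℂ] V.carrier), Function.Injective φ ∧
      ∀ (n : ℕ) (u v : S), (∑ᶠ k : ℕ, (V.D ^ k) (φ ((A.F n u v) k))) = V.mul n (φ u) (φ v) := by
  refine ⟨hI.quotientVL hM hdef, I.mkQ ∘ₗ Finsupp.lsingle 0,
    (injective_iff_map_eq_zero _).2 fun u hu => hinj u ((Submodule.Quotient.mk_eq_zero I).1 hu),
    fun n u v => ?_⟩
  have hlift : liftD hI.quotientD (I.mkQ ∘ₗ Finsupp.lsingle 0) = I.mkQ :=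
    (eq_liftD (f := I.mkQ) fun _ => rfl).symm
  rw [← liftD_apply]
  exact (LinearMap.congr_fun hlift _).trans (congrArg I.mkQ (hM.1 n u v).symm)

theorem injective_of_vertexLie (hM : ExtProp A M)
    (hmin : ∀ J : Submodule ℂ (ℕ →₀ S), FIsIdeal M J → JDefects A M ∪ SSDefects A ⊆ J → I ≤ J)
    (V : VLBundle.{u}) (φ : S →ₗ[ℂ] V.carrier) (hφ : Function.Injective φ)
    (hcompat : ∀ (n : ℕ) (u v : S),
      (∑ᶠ k : ℕ, (V.D ^ k) (φ ((A.F n u v) k))) = V.mul n (φ u) (φ v))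
    (u : S) (hu : Finsupp.single 0 u ∈ I) : u = 0 := by
  have hφ0 : ∀ u, liftD V.D φ (Finsupp.single 0 u) = φ u := fun u => by
    rw [liftD_single, pow_zero, Module.End.one_apply]
  have hfD := semiconj_liftD V.D φ
  have hfμ := hM.map_mul_of_single V.isConformalAlgebra hfD fun n u v => by
    rw [hM.1, liftD_apply, hcompat, hφ0, hφ0]
  have hdef : JDefects A M ∪ SSDefects A ⊆ LinearMap.ker (liftD V.D φ) := by
    rintro _ (⟨u, v, w, m, n, rfl⟩ | ⟨u, v, n, rfl⟩) <;> rw [SetLike.mem_coe, LinearMap.mem_ker]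
    · rw [← hM.jacobiDefect_single, map_jacobiDefect hfμ, V.jacobiDefect_eq_zero]
    · rw [← hM.skewDefect_single, map_skewDefect hM.isLocal hfD hfμ, V.skewDefect_eq_zero]
  have hker := hmin _ (fIsIdeal_ker hfD hfμ) hdef hu
  rw [LinearMap.mem_ker, hφ0] at hker
  exact (injective_iff_map_eq_zero φ).1 hφ u hker

end Main

/-- a formula `S` is `(J+ss)`-injective (i.e. `S ∩ ⟨J+ss⟩ = 0`, where
`⟨J+ss⟩` is the smallest ideal of `ℂ[D]⊗S` containing all commutator and skew defects)
if and only if there is a vertex Lie algebra `V` and an injective linear map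
`φ : S → V` such that the induced map `φ̃ : ℂ[D]⊗S → V`, `D^k⊗u ↦ D^k(φ u)`,
is compatible with the products, i.e. `φ̃(uₙv) = φ(u)ₙφ(v)` for all `u, v ∈ S`. -/
theorem stmt14 (A : Formula S)
    (M : ℕ → (ℕ →₀ S) →ₗ[ℂ] (ℕ →₀ S) →ₗ[ℂ] (ℕ →₀ S)) (hM : ExtProp A M)
    (I : Submodule ℂ (ℕ →₀ S)) (hI : FIsIdeal M I)
    (hdef : JDefects A M ∪ SSDefects A ⊆ I)
    (hmin : ∀ J : Submodule ℂ (ℕ →₀ S),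
      FIsIdeal M J → JDefects A M ∪ SSDefects A ⊆ J → I ≤ J) :
    (∀ u : S, Finsupp.single 0 u ∈ I → u = 0) ↔
      ∃ (V : VLBundle.{u}) (φ : S →ₗ[ℂ] V.carrier),
        Function.Injective φ ∧
        ∀ (n : ℕ) (u v : S),
          (∑ᶠ k : ℕ, (V.D ^ k) (φ ((A.F n u v) k))) = V.mul n (φ u) (φ v) :=
  ⟨exists_vertexLie_of_injective hM hI hdef,
    fun ⟨V, φ, hφ, hcompat⟩ => injective_of_vertexLie hM hmin V φ hφ hcompat⟩

end
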